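/- arXiv:1504.00519 — 2 statements merged into one kernel-verified Lean document; each statement's English description precedes it below -/
import Mathlib

section
/- Fix a>0 and λ∈(0,1). There exists a constant C>0, depending only on a, λ and the doubling constant c_d, such that for all h,k∈ℕ with the closure of B̂((x₀,t₀), 2(λ^{2k}(1+h²log²(1/λ)))^{1/4}) contained in S, the compact set F_k^h = {(ξ,τ)∈S∖Ω : λ^{k+1} ≤ t₀−τ ≤ λ^k, exp(d(x₀,ξ)²/(t₀−τ)) ≤ (1/λ)^h} satisfies C_a(F_k^h) ≤ C · h^{Q/2} · |B(x₀, λ^{k/2})|. -/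
open MeasureTheory Set
open scoped ENNReal NNReal

noncomputable section

/-- ℝ^N with Euclidean structure and Lebesgue measure. -/
abbrev Vec (N : ℕ) := EuclideanSpace ℝ (Fin N)

/-- The `d`-ball `B(x,r) = {y : d(x,y) < r}`. -/
def dBall {N : ℕ} (d : Vec N → Vec N → ℝ) (x : Vec N) (r : ℝ) : Set (Vec N) :=
  {y | d x y < r}

/-- Lebesgue measure is doubling with respect to `d`, with doubling constant `cd`. -/
def Doubling {N : ℕ} (d : Vec N → Vec N → ℝ) (cd : ℝ) : Prop :=
  ∀ (x : Vec N) (r : ℝ), 0 < r →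
    volume (dBall d x (2 * r)) ≤ ENNReal.ofReal cd * volume (dBall d x r)

/-- `d` is a metric on ℝ^N inducing the Euclidean topology (with bounded `d`-balls,
as in assumption (D1) of the paper). -/
structure GoodMetric {N : ℕ} (d : Vec N → Vec N → ℝ) : Prop where
  nonneg : ∀ x y, 0 ≤ d x y
  eq_zero_iff : ∀ x y, d x y = 0 ↔ x = y
  symm : ∀ x y, d x y = d y x
  triangle : ∀ x y z, d x z ≤ d x y + d y z
  cont : Continuous fun p : Vec N × Vec N => d p.1 p.2
  finer : ∀ (x : Vec N) (ε : ℝ), 0 < ε → ∃ δ > 0, ∀ y, d x y < δ → dist x y < ε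
  bounded : ∀ (x : Vec N) (r : ℝ), Bornology.IsBounded (dBall d x r)

/-- The strip `S = ℝ^N × (T₁,T₂)`. -/
def strip (N : ℕ) (T₁ T₂ : EReal) : Set (Vec N × ℝ) :=
  {z | T₁ < (z.2 : EReal) ∧ (z.2 : EReal) < T₂}

/-- The `d`-Gaussian kernel of exponent `a`. -/
def gaussK {N : ℕ} (d : Vec N → Vec N → ℝ) (a : ℝ) (z ζ : Vec N × ℝ) : ℝ≥0∞ :=
  if ζ.2 < z.2 then
    (volume (dBall d z.1 (Real.sqrt (z.2 - ζ.2))))⁻¹ *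
      ENNReal.ofReal (Real.exp (-a * d z.1 ζ.1 ^ 2 / (z.2 - ζ.2)))
  else 0

/-- Capacity of `F` with respect to the kernel `K`: supremum of total masses of
nonnegative Radon measures supported in `F` whose `K`-potential is `≤ 1` on `X`. -/
def capac {α : Type*} [TopologicalSpace α] [MeasurableSpace α]
    (X : Set α) (K : α → α → ℝ≥0∞) (F : Set α) : ℝ≥0∞ :=
  ⨆ (μ : Measure α) (_ : μ.InnerRegular ∧ IsLocallyFiniteMeasure μ ∧ μ Fᶜ = 0 ∧
      ∀ z ∈ X, ∫⁻ ζ, K z ζ ∂μ ≤ 1), μ F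

/-- The parabolic counterpart `d̂` of `d`. -/
def pdist {N : ℕ} (d : Vec N → Vec N → ℝ) (z ζ : Vec N × ℝ) : ℝ :=
  (d z.1 ζ.1 ^ 4 + (z.2 - ζ.2) ^ 2) ^ (1 / 4 : ℝ)

/-- The parabolic ball `B̂(z,r)` (as a subset of ℝ^{N+1}). -/
def pBall {N : ℕ} (d : Vec N → Vec N → ℝ) (z : Vec N × ℝ) (r : ℝ) : Set (Vec N × ℝ) :=
  {ζ | pdist d z ζ < r}

/-- The ring-shaped set `Ω_k^h(z₀,λ)`. -/
def ringSet {N : ℕ} (d : Vec N → Vec N → ℝ) (S Ω : Set (Vec N × ℝ)) (z₀ : Vec N × ℝ)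
    (lam : ℝ) (k h : ℤ) : Set (Vec N × ℝ) :=
  {ζ ∈ S \ Ω | lam ^ (k + 1) ≤ z₀.2 - ζ.2 ∧ z₀.2 - ζ.2 ≤ lam ^ k ∧
    (1 / lam) ^ (h - 1) ≤ Real.exp (d z₀.1 ζ.1 ^ 2 / (z₀.2 - ζ.2)) ∧
    Real.exp (d z₀.1 ζ.1 ^ 2 / (z₀.2 - ζ.2)) ≤ (1 / lam) ^ h ∧
    pdist d z₀ ζ ≤ Real.sqrt lam}

/-- The set `D_k^h(z₀,λ)`. -/
def DSet {N : ℕ} (d : Vec N → Vec N → ℝ) (S Ω : Set (Vec N × ℝ)) (z₀ : Vec N × ℝ)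
    (lam : ℝ) (k h : ℤ) : Set (Vec N × ℝ) :=
  {ζ ∈ S \ Ω | lam ^ (k + 1) ≤ z₀.2 - ζ.2 ∧ z₀.2 - ζ.2 ≤ lam ^ k ∧
    Real.exp (d z₀.1 ζ.1 ^ 2 / (z₀.2 - ζ.2)) ≤ (1 / lam) ^ h ∧
    pdist d z₀ ζ ≤ Real.sqrt lam}

/-- The Wiener-type series `z_a^b(λ;s)`. -/
def zSeries {N : ℕ} (d : Vec N → Vec N → ℝ) (S Ω : Set (Vec N × ℝ)) (z₀ : Vec N × ℝ)
    (a b lam s : ℝ) : ℝ≥0∞ :=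
  ∑' k : ℕ, ∑' h : ℕ,
    if 1 ≤ k ∧ (k : ℝ) ≤ s ∧ 1 ≤ h then
      ENNReal.ofReal (lam ^ (b * (h : ℝ))) *
        capac S (gaussK d a) (DSet d S Ω z₀ lam (k : ℤ) (h : ℤ)) /
        volume (dBall d z₀.1 (lam ^ ((k : ℝ) / 2)))
    else 0

/-- The section `E_λ(ρ,τ)`. -/
def Eset {N : ℕ} (d : Vec N → Vec N → ℝ) (S Ω : Set (Vec N × ℝ)) (z₀ : Vec N × ℝ)
    (lam ρ τ : ℝ) : Set (Vec N) :=
  {x | (x, τ) ∈ S \ Ω ∧ pdist d z₀ (x, τ) ≤ Real.sqrt lam ∧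
    Real.exp (d z₀.1 x ^ 2 / (z₀.2 - τ)) ≤ ρ}

end

/-
Test the potential of an admissible measure at the single point `z = (x₀, t₀ + s)`,
`s = h λ^k log(1/λ)`, which the hypothesis on `B̂` places in `S`. For `ζ = (ξ,τ) ∈ F_k^h` the time
lag `t = t₀ + s − τ` satisfies `d(x₀,ξ)² ≤ h log(1/λ) (t₀ − τ) ≤ s ≤ t ≤ λ^k h (1 + log(1/λ))`, so
the Gaussian factor of `G_a(z,ζ)` is at least `e^{-a}` and, by doubling,
`|B(x₀,√t)| ≤ c_d (h (1 + log(1/λ)))^{Q/2} |B(x₀,λ^{k/2})|`. Thus `G_a(z,·)` is bounded below on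
`F_k^h` by the reciprocal of the claimed bound, and a potential `≤ 1` at `z` bounds the mass.
-/

open Real

theorem capac_le_inv_of_forall_le_kernel {α : Type*} [TopologicalSpace α] [MeasurableSpace α]
    {X F : Set α} {K : α → α → ℝ≥0∞} {z : α} (hz : z ∈ X) {c : ℝ≥0∞}
    (hc : ∀ ζ ∈ F, c ≤ K z ζ) : capac X K F ≤ c⁻¹ := by
  refine iSup₂_le fun μ ⟨_, _, hnull, hpot⟩ => ENNReal.le_inv_iff_mul_le.2 ?_
  have hae : ∀ᵐ ζ ∂μ, c ≤ K z ζ :=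
    measure_mono_null (fun ζ hζ => by_contra fun hF => hζ (hc ζ (not_not.1 hF))) hnull
  calc μ F * c ≤ μ univ * c := mul_le_mul_left (measure_mono (subset_univ F)) c
    _ = ∫⁻ _, c ∂μ := by rw [lintegral_const, mul_comm]
    _ ≤ ∫⁻ ζ, K z ζ ∂μ := lintegral_mono_ae hae
    _ ≤ 1 := hpot z hz

theorem le_two_pow_ceil_logb {R : ℝ} (hR : 0 < R) : R ≤ 2 ^ ⌈logb 2 R⌉₊ := by
  calc R = 2 ^ logb 2 R := (rpow_logb two_pos (by norm_num) hR).symm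
    _ ≤ 2 ^ (⌈logb 2 R⌉₊ : ℝ) := rpow_le_rpow_of_exponent_le one_le_two (Nat.le_ceil _)
    _ = 2 ^ ⌈logb 2 R⌉₊ := rpow_natCast 2 _

theorem rpow_logb_comm {b x : ℝ} (hb : 0 < b) (hx : 0 < x) :
    b ^ logb 2 x = x ^ logb 2 b := by
  rw [rpow_def_of_pos hb, rpow_def_of_pos hx, logb, logb, mul_div_left_comm]

theorem pow_ceil_logb_le {c R : ℝ} (hc : 1 ≤ c) (hR : 1 ≤ R) :
    c ^ ⌈logb 2 R⌉₊ ≤ c * R ^ logb 2 c := by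
  have hceil : (⌈logb 2 R⌉₊ : ℝ) ≤ logb 2 R + 1 :=
    (Nat.ceil_lt_add_one (logb_nonneg one_lt_two hR)).le
  calc c ^ ⌈logb 2 R⌉₊ = c ^ (⌈logb 2 R⌉₊ : ℝ) := (rpow_natCast c _).symm
    _ ≤ c ^ (logb 2 R + 1) := rpow_le_rpow_of_exponent_le hc hceil
    _ = c * R ^ logb 2 c := by
      rw [rpow_add (by linarith), rpow_one, rpow_logb_comm (by linarith) (by linarith), mul_comm]

theorem le_mul_log_mul_of_exp_div_le {lam t D : ℝ} (hlam : 0 < lam) (ht : 0 < t) {n : ℕ}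
    (h : exp (D / t) ≤ (1 / lam) ^ (n : ℤ)) : D ≤ n * log (1 / lam) * t := by
  rwa [zpow_natCast, ← exp_log (one_div_pos.2 hlam), ← exp_nat_mul, exp_le_exp,
    div_le_iff₀ ht] at h

section Kernel

variable {N : ℕ} {d : Vec N → Vec N → ℝ} {cd : ℝ}

theorem dBall_subset_dBall (x : Vec N) {r r' : ℝ} (h : r ≤ r') : dBall d x r ⊆ dBall d x r' :=
  fun _ hy => lt_of_lt_of_le hy h

theorem Doubling.volume_dBall_two_pow_mul_le (hdb : Doubling d cd) (x : Vec N) {r : ℝ}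
    (hr : 0 < r) (m : ℕ) :
    volume (dBall d x (2 ^ m * r)) ≤ ENNReal.ofReal cd ^ m * volume (dBall d x r) := by
  induction m with
  | zero => simp
  | succ m ih =>
    calc volume (dBall d x (2 ^ (m + 1) * r))
        = volume (dBall d x (2 * (2 ^ m * r))) := by rw [pow_succ, mul_comm _ (2 : ℝ), mul_assoc]
      _ ≤ ENNReal.ofReal cd * volume (dBall d x (2 ^ m * r)) := hdb x _ (by positivity)
      _ ≤ ENNReal.ofReal cd * (ENNReal.ofReal cd ^ m * volume (dBall d x r)) := by gcongr
      _ = ENNReal.ofReal cd ^ (m + 1) * volume (dBall d x r) := by rw [pow_succ', mul_assoc]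

theorem Doubling.volume_dBall_le_of_le_mul (hdb : Doubling d cd) (hcd : 1 ≤ cd) (x : Vec N)
    {r R ρ : ℝ} (hR : 1 ≤ R) (hρ : 0 < ρ) (hr : r ≤ R * ρ) :
    volume (dBall d x r) ≤ ENNReal.ofReal (cd * R ^ logb 2 cd) * volume (dBall d x ρ) := by
  set m := ⌈logb 2 R⌉₊
  have hrm : r ≤ 2 ^ m * ρ := hr.trans (by gcongr; exact le_two_pow_ceil_logb (by linarith))
  calc volume (dBall d x r) ≤ volume (dBall d x (2 ^ m * ρ)) :=
        measure_mono (dBall_subset_dBall x hrm)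
    _ ≤ ENNReal.ofReal cd ^ m * volume (dBall d x ρ) := hdb.volume_dBall_two_pow_mul_le x hρ m
    _ ≤ ENNReal.ofReal (cd * R ^ logb 2 cd) * volume (dBall d x ρ) := by
      rw [← ENNReal.ofReal_pow (by linarith)]
      gcongr
      exact pow_ceil_logb_le hcd hR

theorem mk_add_mem_pBall (hd : GoodMetric d) (z : Vec N × ℝ) {s X : ℝ} (hX : 0 < X)
    (hs : s ^ 2 ≤ X) : (z.1, z.2 + s) ∈ pBall d z (2 * X ^ (1 / 4 : ℝ)) := by
  have hpdist : pdist d z (z.1, z.2 + s) = (s ^ 2) ^ (1 / 4 : ℝ) := by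
    simp [pdist, (hd.eq_zero_iff z.1 z.1).2 rfl]
  show pdist d z (z.1, z.2 + s) < _
  rw [hpdist]
  linarith [rpow_pos_of_pos hX (1 / 4 : ℝ), rpow_le_rpow (sq_nonneg s) hs (by norm_num : (0 : ℝ) ≤ 1 / 4)]

theorem inv_ofReal_exp_mul_le_gaussK {a : ℝ} (ha : 0 ≤ a) {z ζ : Vec N × ℝ} {W : ℝ≥0∞}
    (hlt : ζ.2 < z.2) (hdist : d z.1 ζ.1 ^ 2 ≤ z.2 - ζ.2)
    (hvol : volume (dBall d z.1 √(z.2 - ζ.2)) ≤ W) :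
    (ENNReal.ofReal (exp a) * W)⁻¹ ≤ gaussK d a z ζ := by
  have hgauss : exp (-a) ≤ exp (-a * d z.1 ζ.1 ^ 2 / (z.2 - ζ.2)) := by
    rw [exp_le_exp, le_div_iff₀ (sub_pos.2 hlt)]
    nlinarith
  rw [gaussK, if_pos hlt, ENNReal.mul_inv (.inl (by simp [exp_pos])) (.inl ENNReal.ofReal_ne_top),
    ← ENNReal.ofReal_inv_of_pos (exp_pos a), ← exp_neg, mul_comm]
  gcongr

theorem inv_le_gaussK_mk_add (hdb : Doubling d cd) (hcd : 1 ≤ cd) {a : ℝ} (ha : 0 ≤ a)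
    {x₀ ξ : Vec N} {t₀ τ r s R : ℝ} (hlag : 0 < t₀ - τ) (hlag_le : t₀ - τ ≤ r)
    (hdist : d x₀ ξ ^ 2 ≤ s) (hR : 1 ≤ R) (hrs : r + s ≤ R ^ 2 * r) :
    (ENNReal.ofReal (exp a) * (ENNReal.ofReal (cd * R ^ logb 2 cd) * volume (dBall d x₀ √r)))⁻¹ ≤
      gaussK d a (x₀, t₀ + s) (ξ, τ) := by
  have hs : 0 ≤ s := (sq_nonneg _).trans hdist
  have hsqrt : √(t₀ + s - τ) ≤ R * √r := by
    rw [← sqrt_sq (by linarith : 0 ≤ R), ← sqrt_mul (sq_nonneg R)]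
    exact sqrt_le_sqrt (by linarith)
  refine inv_ofReal_exp_mul_le_gaussK ha (by simp only; linarith) (by simp only; linarith) ?_
  exact hdb.volume_dBall_le_of_le_mul hcd x₀ hR (sqrt_pos.2 (by linarith)) hsqrt

end Kernel

/-- Capacity bound (4.6) in the paper: `C_a(F_k^h) ≤ C h^{Q/2} |B(x₀,λ^{k/2})|`. -/
theorem stmt9 (a lam cd : ℝ) (ha : 0 < a) (hlam : lam ∈ Set.Ioo 0 1) (hcd : 1 < cd) :
    ∃ C : ℝ, 0 < C ∧
      ∀ (N : ℕ), 1 ≤ N → ∀ d : Vec N → Vec N → ℝ, GoodMetric d → Doubling d cd →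
      ∀ T₁ T₂ : EReal, T₁ < T₂ →
      ∀ Ω : Set (Vec N × ℝ), IsOpen Ω → Bornology.IsBounded Ω →
        closure Ω ⊆ strip N T₁ T₂ →
      ∀ z₀ : Vec N × ℝ, z₀ ∈ frontier Ω →
      ∀ h k : ℕ, 1 ≤ h → 1 ≤ k →
      closure (pBall d z₀
          (2 * (lam ^ (2 * (k : ℝ)) *
            (1 + (h : ℝ) ^ 2 * Real.log (1 / lam) ^ 2)) ^ (1 / 4 : ℝ))) ⊆
        strip N T₁ T₂ →
      capac (strip N T₁ T₂) (gaussK d a)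
          {ζ ∈ strip N T₁ T₂ \ Ω |
            lam ^ ((k : ℤ) + 1) ≤ z₀.2 - ζ.2 ∧ z₀.2 - ζ.2 ≤ lam ^ (k : ℤ) ∧
            Real.exp (d z₀.1 ζ.1 ^ 2 / (z₀.2 - ζ.2)) ≤ (1 / lam) ^ (h : ℤ)} ≤
        ENNReal.ofReal (C * (h : ℝ) ^ (Real.logb 2 cd / 2)) *
          volume (dBall d z₀.1 (lam ^ ((k : ℝ) / 2))) := by
  obtain ⟨hlam0, hlam1⟩ := hlam
  set L := log (1 / lam)
  have hL : 0 < L := log_pos (one_lt_one_div hlam0 hlam1)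
  set Q := logb 2 cd
  refine ⟨exp a * cd * (1 + L) ^ (Q / 2), by positivity, ?_⟩
  intro N _ d hd hdb T₁ T₂ _ Ω _ _ _ z₀ _ h k hh _ hball
  have hh1 : (1 : ℝ) ≤ h := Nat.one_le_cast.2 hh
  have hlamk : 0 < lam ^ k := pow_pos hlam0 k
  set s : ℝ := h * lam ^ k * L with hs
  set u : ℝ := h * (1 + L)
  have hz : (z₀.1, z₀.2 + s) ∈ strip N T₁ T₂ := by
    refine hball (subset_closure (mk_add_mem_pBall hd z₀ (by positivity) ?_))
    rw [show lam ^ (2 * (k : ℝ)) = (lam ^ k) ^ 2 by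
      rw [← rpow_natCast, ← rpow_natCast, ← rpow_mul hlam0.le]; push_cast; ring_nf]
    nlinarith [sq_nonneg (lam ^ k)]
  have hρ : √(lam ^ k) = lam ^ ((k : ℝ) / 2) := by
    rw [sqrt_eq_rpow, ← rpow_natCast, ← rpow_mul hlam0.le]; ring_nf
  refine (capac_le_inv_of_forall_le_kernel (c := (ENNReal.ofReal (exp a) *
      (ENNReal.ofReal (cd * √u ^ Q) * volume (dBall d z₀.1 √(lam ^ k))))⁻¹) hz ?_).trans_eq ?_
  · rintro ζ ⟨-, hlow, hup, hexp⟩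
    have hlag : 0 < z₀.2 - ζ.2 := (zpow_pos hlam0 _).trans_le hlow
    rw [zpow_natCast] at hup
    have hdist : d z₀.1 ζ.1 ^ 2 ≤ s := by
      calc d z₀.1 ζ.1 ^ 2 ≤ h * L * (z₀.2 - ζ.2) := le_mul_log_mul_of_exp_div_le hlam0 hlag hexp
        _ ≤ h * L * lam ^ k := by gcongr
        _ = s := by rw [hs]; ring
    refine inv_le_gaussK_mk_add hdb hcd.le ha.le hlag hup hdist (one_le_sqrt.2 (by nlinarith)) ?_
    rw [sq_sqrt (by positivity)]
    nlinarith
  · rw [inv_inv, hρ, ← mul_assoc, ← ENNReal.ofReal_mul (exp_pos a).le, sqrt_eq_rpow,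
      ← rpow_mul (by positivity), mul_rpow (by positivity) (by positivity)]
    ring_nf
end

section
/- Fix constants Λ>0, a₀>0, b₀>0 and let Γ : S×S → [0,∞] satisfy the two-sided Gaussian bound (1/Λ)·G_{b₀}(z,ζ) ≤ Γ(z,ζ) ≤ Λ·G_{a₀}(z,ζ) for all z,ζ∈S. Then there exists λ₀∈(0,1/8], depending only on Λ, a₀, b₀ and the doubling constant c_d, such that for all M≥e, r>0 with ℝ^N×(−r,r)⊆S, and all points z=(x,t), ζ=(ξ,τ), (y,s) satisfying t>τ, d(x,0)≤√(λ₀ r log M), d(ξ,0)≤√(λ₀ r log M), t,τ∈(−λ₀r, λ₀r), τ ≤ s ≤ t, and d(y,ξ) ≥ (1/2)·√(r log M / 2), one has Γ(y,s,ζ) ≤ (1/2)·Γ(z,ζ). -/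
open MeasureTheory Set
open scoped ENNReal NNReal

/-!
Write `R = d(y,ξ)` and `u = R / √(s-τ)`. In the small cylinder `d(x,ξ) ≤ 2R` and `√(t-τ) ≤ 2R`,
so `B(x,√(t-τ)) ⊆ B(y,5R)` and doubling gives `|B(x,√(t-τ))| ≤ c_d (5u)^Q |B(y,√(s-τ))|`.
The upper bound for `Γ(y,s,ζ)` is therefore at most `Λ c_d (5u)^Q e^{-a₀u²} |B(x,√(t-τ))|⁻¹`.
Half of the exponent `a₀u²` dominates `b₀ d(x,ξ)²/(t-τ)` once `λ₀ ≤ a₀/(64 b₀)`; the other half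
beats the polynomial factor, `c_d (5u)^Q e^{-a₀u²/2} ≤ 1/(2Λ²)`, because `u² ≥ 1/(16 λ₀)` is large
when `λ₀` is small. Comparing with the lower bound for `Γ(z,ζ)` gives the factor `1/2`.
-/

open Real Filter Topology

section Metric

variable {N : ℕ} {d : Vec N → Vec N → ℝ} {cd : ℝ}

theorem dBall_mono {x : Vec N} {r R : ℝ} (h : r ≤ R) : dBall d x r ⊆ dBall d x R :=
  fun _ hy => lt_of_lt_of_le hy h

namespace GoodMetric

theorem isOpen_dBall (hd : GoodMetric d) (x : Vec N) (r : ℝ) : IsOpen (dBall d x r) :=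
  isOpen_Iio.preimage (hd.cont.comp (continuous_const.prodMk continuous_id))

theorem volume_dBall_pos (hd : GoodMetric d) (x : Vec N) {r : ℝ} (hr : 0 < r) :
    0 < volume (dBall d x r) :=
  (hd.isOpen_dBall x r).measure_pos volume
    ⟨x, show d x x < r by rwa [(hd.eq_zero_iff x x).2 rfl]⟩

theorem volume_dBall_lt_top (hd : GoodMetric d) (x : Vec N) (r : ℝ) :
    volume (dBall d x r) < ∞ :=
  (hd.bounded x r).measure_lt_top

theorem dBall_subset_dBall (hd : GoodMetric d) {x y : Vec N} {r R : ℝ} (h : d y x + r ≤ R) :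
    dBall d x r ⊆ dBall d y R := fun w (hw : d x w < r) =>
  show d y w < R by linarith [hd.triangle y x w]

end GoodMetric

namespace Doubling

theorem volume_dBall_two_pow_mul_le_s18 (hD : Doubling d cd) (x : Vec N) {r : ℝ} (hr : 0 < r)
    (m : ℕ) : volume (dBall d x (2 ^ m * r)) ≤ ENNReal.ofReal cd ^ m * volume (dBall d x r) := by
  induction m with
  | zero => simp
  | succ m ih =>
    calc volume (dBall d x (2 ^ (m + 1) * r)) = volume (dBall d x (2 * (2 ^ m * r))) := by
          rw [pow_succ, mul_comm _ (2 : ℝ), mul_assoc]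
      _ ≤ ENNReal.ofReal cd * volume (dBall d x (2 ^ m * r)) := hD x _ (by positivity)
      _ ≤ ENNReal.ofReal cd * (ENNReal.ofReal cd ^ m * volume (dBall d x r)) := by gcongr
      _ = ENNReal.ofReal cd ^ (m + 1) * volume (dBall d x r) := by ring

theorem volume_dBall_le_rpow (hD : Doubling d cd) (hcd : 1 ≤ cd) (x : Vec N) {ρ R : ℝ}
    (hρ : 0 < ρ) (hρR : ρ ≤ R) :
    volume (dBall d x R) ≤ ENNReal.ofReal (cd * (R / ρ) ^ logb 2 cd) * volume (dBall d x ρ) := by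
  set m := ⌈logb 2 (R / ρ)⌉₊
  have hcd0 : 0 < cd := one_pos.trans_le hcd
  have hRρ : 0 < R / ρ := div_pos (hρ.trans_le hρR) hρ
  have hlog : 0 ≤ logb 2 (R / ρ) := logb_nonneg one_lt_two ((one_le_div hρ).2 hρR)
  have hR : R ≤ 2 ^ m * ρ := by
    rw [← div_le_iff₀ hρ, ← rpow_natCast]
    exact (logb_le_iff_le_rpow one_lt_two hRρ).1 (Nat.le_ceil _)
  have hpow : cd ^ m ≤ cd * (R / ρ) ^ logb 2 cd :=
    calc cd ^ m = cd ^ (m : ℝ) := (rpow_natCast _ _).symm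
      _ ≤ cd ^ (logb 2 (R / ρ) + 1) :=
          rpow_le_rpow_of_exponent_le hcd (Nat.ceil_lt_add_one hlog).le
      _ = cd * (R / ρ) ^ logb 2 cd := by
          rw [rpow_add_one hcd0.ne', rpow_def_of_pos hcd0, rpow_def_of_pos hRρ, logb, logb]
          ring_nf
  calc volume (dBall d x R) ≤ volume (dBall d x (2 ^ m * ρ)) := measure_mono (dBall_mono hR)
    _ ≤ ENNReal.ofReal cd ^ m * volume (dBall d x ρ) := hD.volume_dBall_two_pow_mul_le_s18 x hρ m
    _ ≤ ENNReal.ofReal (cd * (R / ρ) ^ logb 2 cd) * volume (dBall d x ρ) := by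
        rw [← ENNReal.ofReal_pow (by linarith)]
        gcongr

end Doubling

theorem gaussK_of_lt {a : ℝ} {z ζ : Vec N × ℝ} (h : ζ.2 < z.2) :
    gaussK d a z ζ = (volume (dBall d z.1 √(z.2 - ζ.2)))⁻¹ *
      ENNReal.ofReal (exp (-a * d z.1 ζ.1 ^ 2 / (z.2 - ζ.2))) :=
  if_pos h

theorem gaussK_of_le {a : ℝ} {z ζ : Vec N × ℝ} (h : z.2 ≤ ζ.2) :
    gaussK d a z ζ = 0 :=
  if_neg h.not_gt

theorem gaussK_le_of_volume_le (hd : GoodMetric d) {a b K c : ℝ} {x y ξ : Vec N} {t s τ : ℝ}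
    (hτs : τ < s) (hτt : τ < t) (hK : 0 ≤ K)
    (hV : volume (dBall d x √(t - τ)) ≤ ENNReal.ofReal K * volume (dBall d y √(s - τ)))
    (hexp : K * exp (-a * d y ξ ^ 2 / (s - τ)) ≤ c * exp (-b * d x ξ ^ 2 / (t - τ))) :
    gaussK d a (y, s) (ξ, τ) ≤ ENNReal.ofReal c * gaussK d b (x, t) (ξ, τ) := by
  rw [gaussK_of_lt hτs, gaussK_of_lt hτt]
  set Vx := volume (dBall d x √(t - τ))
  set Vy := volume (dBall d y √(s - τ))
  have hVx0 : Vx ≠ 0 := (hd.volume_dBall_pos x (sqrt_pos.2 (sub_pos.2 hτt))).ne'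
  have hVy0 : Vy ≠ 0 := (hd.volume_dBall_pos y (sqrt_pos.2 (sub_pos.2 hτs))).ne'
  have hc : 0 ≤ c :=
    nonneg_of_mul_nonneg_left ((mul_nonneg hK (exp_pos _).le).trans hexp) (exp_pos _)
  have hVy : Vy⁻¹ ≤ ENNReal.ofReal K * Vx⁻¹ := by
    refine (ENNReal.inv_le_iff_le_mul (fun _ => hVy0)
      (fun h => absurd h (hd.volume_dBall_lt_top y _).ne)).2 ?_
    calc 1 = Vx * Vx⁻¹ := (ENNReal.mul_inv_cancel hVx0 (hd.volume_dBall_lt_top x _).ne).symm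
      _ ≤ ENNReal.ofReal K * Vy * Vx⁻¹ := by gcongr
      _ = Vy * (ENNReal.ofReal K * Vx⁻¹) := by ring
  calc Vy⁻¹ * ENNReal.ofReal (exp (-a * d y ξ ^ 2 / (s - τ)))
      ≤ ENNReal.ofReal K * Vx⁻¹ * ENNReal.ofReal (exp (-a * d y ξ ^ 2 / (s - τ))) := by gcongr
    _ = Vx⁻¹ * ENNReal.ofReal (K * exp (-a * d y ξ ^ 2 / (s - τ))) := by
        rw [ENNReal.ofReal_mul hK]; ring
    _ ≤ Vx⁻¹ * ENNReal.ofReal (c * exp (-b * d x ξ ^ 2 / (t - τ))) := by gcongr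
    _ = ENNReal.ofReal c * (Vx⁻¹ * ENNReal.ofReal (exp (-b * d x ξ ^ 2 / (t - τ)))) := by
        rw [ENNReal.ofReal_mul hc]; ring

theorem volume_dBall_le_of_far (hd : GoodMetric d) (hD : Doubling d cd) (hcd : 1 ≤ cd)
    {x y ξ : Vec N} {T δ : ℝ} (hδ : 0 < δ) (hδT : δ ≤ T) (hxξ : d x ξ ≤ 2 * d y ξ)
    (hT : √T ≤ 2 * d y ξ) :
    volume (dBall d x √T) ≤
      ENNReal.ofReal (cd * (5 * (d y ξ / √δ)) ^ logb 2 cd) * volume (dBall d y √δ) := by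
  have hyx : d y x ≤ 3 * d y ξ := by linarith [hd.triangle y ξ x, hd.symm ξ x]
  have hδR : √δ ≤ 5 * d y ξ := by linarith [sqrt_le_sqrt hδT, hd.nonneg y ξ]
  calc volume (dBall d x √T) ≤ volume (dBall d y (5 * d y ξ)) :=
        measure_mono (hd.dBall_subset_dBall (by linarith))
    _ ≤ _ := by
      rw [← mul_div_assoc]
      exact hD.volume_dBall_le_rpow hcd y (sqrt_pos.2 hδ) hδR

theorem gaussK_le_of_far (hd : GoodMetric d) (hD : Doubling d cd) (hcd : 1 ≤ cd)
    {a b c : ℝ} {x y ξ : Vec N} {t s τ : ℝ} (hτs : τ < s) (hst : s ≤ t)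
    (hxξ : d x ξ ≤ 2 * d y ξ) (hT : √(t - τ) ≤ 2 * d y ξ)
    (hab : b * d x ξ ^ 2 / (t - τ) ≤ a / 2 * (d y ξ / √(s - τ)) ^ 2)
    (hc : cd * (5 * (d y ξ / √(s - τ))) ^ logb 2 cd *
      exp (-(a / 2) * (d y ξ / √(s - τ)) ^ 2) ≤ c) :
    gaussK d a (y, s) (ξ, τ) ≤ ENNReal.ofReal c * gaussK d b (x, t) (ξ, τ) := by
  set u := d y ξ / √(s - τ)
  have hu : d y ξ ^ 2 / (s - τ) = u ^ 2 := by rw [div_pow, sq_sqrt (sub_pos.2 hτs).le]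
  have hK : 0 ≤ cd * (5 * u) ^ logb 2 cd :=
    mul_nonneg (by linarith) (rpow_nonneg
      (mul_nonneg (by norm_num) (div_nonneg (hd.nonneg y ξ) (sqrt_nonneg _))) _)
  have hc0 : 0 ≤ c := (mul_nonneg hK (exp_pos _).le).trans hc
  refine gaussK_le_of_volume_le hd hτs (hτs.trans_le hst) hK
    (volume_dBall_le_of_far hd hD hcd (sub_pos.2 hτs) (by linarith) hxξ hT) ?_
  calc cd * (5 * u) ^ logb 2 cd * exp (-a * d y ξ ^ 2 / (s - τ))
      = cd * (5 * u) ^ logb 2 cd * exp (-(a / 2) * u ^ 2) * exp (-(a / 2 * u ^ 2)) := by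
        rw [mul_div_assoc, hu, mul_assoc _ (exp _), ← exp_add]
        ring_nf
    _ ≤ c * exp (-(b * d x ξ ^ 2 / (t - τ))) := by gcongr
    _ = c * exp (-b * d x ξ ^ 2 / (t - τ)) := by ring_nf

end Metric

theorem le_half_mul_of_two_sided {Λ : ℝ} (hΛ : 0 < Λ) {p q A B : ℝ≥0∞}
    (hp : p ≤ ENNReal.ofReal Λ * A) (hq : (ENNReal.ofReal Λ)⁻¹ * B ≤ q)
    (hAB : A ≤ ENNReal.ofReal (2 * Λ ^ 2)⁻¹ * B) : p ≤ 1 / 2 * q := by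
  have hΛ2 :
      ENNReal.ofReal Λ * ENNReal.ofReal (2 * Λ ^ 2)⁻¹ = 1 / 2 * (ENNReal.ofReal Λ)⁻¹ := by
    rw [← ENNReal.ofReal_mul hΛ.le, ← ENNReal.ofReal_inv_of_pos hΛ, one_div,
      ← ENNReal.ofReal_ofNat 2, ← ENNReal.ofReal_inv_of_pos two_pos,
      ← ENNReal.ofReal_mul (by norm_num)]
    congr 1
    field_simp
  calc p ≤ ENNReal.ofReal Λ * (ENNReal.ofReal (2 * Λ ^ 2)⁻¹ * B) := hp.trans (by gcongr)
    _ = 1 / 2 * ((ENNReal.ofReal Λ)⁻¹ * B) := by rw [← mul_assoc, hΛ2, mul_assoc]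
    _ ≤ 1 / 2 * q := by gcongr

theorem tendsto_mul_rpow_mul_exp_neg_mul_sq (C c Q : ℝ) {a : ℝ} (ha : 0 < a) (hc : 0 ≤ c) :
    Tendsto (fun u => C * (c * u) ^ Q * exp (-a * u ^ 2)) atTop (𝓝 0) := by
  have h := (rpow_mul_exp_neg_mul_sq_isLittleO_exp_neg ha Q).tendsto_zero_of_tendsto
    (tendsto_exp_atBot.comp (tendsto_id.const_mul_atTop_of_neg (by norm_num)))
  have h' : Tendsto (fun u => C * c ^ Q * (u ^ Q * exp (-a * u ^ 2))) atTop (𝓝 0) := by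
    simpa using h.const_mul (C * c ^ Q)
  refine h'.congr' ?_
  filter_upwards [eventually_ge_atTop 0] with u hu
  rw [mul_rpow hc hu]
  ring

theorem exists_small_scale (cd : ℝ) {a b ε : ℝ} (ha : 0 < a) (hb : 0 < b) (hε : 0 < ε) :
    ∃ lam : ℝ, 0 < lam ∧ lam ≤ 1 / 8 ∧ lam * (64 * b) ≤ a ∧
      ∀ u : ℝ, 0 ≤ u → 1 ≤ 16 * lam * u ^ 2 →
        cd * (5 * u) ^ logb 2 cd * exp (-(a / 2) * u ^ 2) ≤ ε := by
  obtain ⟨u₀, hu₀⟩ := eventually_atTop.1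
    ((tendsto_mul_rpow_mul_exp_neg_mul_sq cd 5 (logb 2 cd) (half_pos ha) (by norm_num)).eventually
      (ge_mem_nhds hε))
  set u₁ := max u₀ 1
  have hu₁ : 0 < u₁ := one_pos.trans_le (le_max_right _ _)
  refine ⟨min (1 / 8) (min (a / (64 * b)) (1 / (16 * u₁ ^ 2))),
    lt_min (by norm_num) (lt_min (by positivity) (by positivity)), min_le_left _ _,
    (le_div_iff₀ (by positivity)).1 ((min_le_right _ _).trans (min_le_left _ _)),
    fun u hu h16 => hu₀ u ((le_max_left u₀ 1).trans ?_)⟩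
  have hlam : min (1 / 8) (min (a / (64 * b)) (1 / (16 * u₁ ^ 2))) * (16 * u₁ ^ 2) ≤ 1 :=
    (le_div_iff₀ (by positivity)).1 ((min_le_right _ _).trans (min_le_right _ _))
  exact (pow_le_pow_iff_left₀ hu₁.le hu two_ne_zero).1 (by nlinarith)

theorem cylinder_bounds {lam r L X R T δ : ℝ} (hlam : 0 < lam) (hlam8 : lam ≤ 1 / 8)
    (hr : 0 < r) (hL : 1 ≤ L) (hX0 : 0 ≤ X) (hX : X ≤ 2 * √(lam * r * L))
    (hR : 1 / 2 * √(r * L / 2) ≤ R) (hδ : 0 < δ) (hδT : δ ≤ T) (hT : T ≤ 2 * lam * r) :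
    X ≤ 2 * R ∧ √T ≤ 2 * R ∧ X ^ 2 / T ≤ 32 * lam * (R ^ 2 / δ) ∧
      1 ≤ 16 * lam * (R ^ 2 / δ) := by
  have hR0 : 0 ≤ R := (by positivity : (0 : ℝ) ≤ 1 / 2 * √(r * L / 2)).trans hR
  have hX2 : X ^ 2 ≤ 4 * lam * (r * L) := by
    have h := pow_le_pow_left₀ hX0 hX 2
    rw [mul_pow, sq_sqrt (by positivity)] at h
    linarith
  have hR2 : r * L ≤ 8 * R ^ 2 := by
    have h := pow_le_pow_left₀ (by positivity) hR 2
    rw [mul_pow, sq_sqrt (by positivity)] at h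
    linarith
  have hrL : r ≤ r * L := le_mul_of_one_le_right hr.le hL
  have hδR : δ ≤ 16 * lam * R ^ 2 := by nlinarith
  refine ⟨(pow_le_pow_iff_left₀ hX0 (by positivity) two_ne_zero).1 (by nlinarith),
    (sqrt_le_left (by positivity)).2 (by nlinarith), ?_, ?_⟩
  · rw [mul_div_assoc']
    exact div_le_div₀ (by positivity) (by nlinarith) hδ hδT
  · rwa [mul_div_assoc', one_le_div hδ]

/-- Key step in the proof of Lemma 3.2 of the paper: for a fundamental-solution-like
kernel `Γ` with two-sided Gaussian bounds, there is a structural `λ₀ ∈ (0,1/8]` such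
that `Γ(y,s;ξ,τ) ≤ (1/2) Γ(x,t;ξ,τ)` whenever `(x,t),(ξ,τ)` lie in the small cylinder
`C(M,λ₀ r)` with `t > τ`, `τ ≤ s ≤ t`, and `y` is far from the spatial center. -/
theorem stmt18 (Λ a₀ b₀ cd : ℝ) (hΛ : 0 < Λ) (ha₀ : 0 < a₀) (hb₀ : 0 < b₀)
    (hcd : 1 < cd) :
    ∃ lam₀ : ℝ, 0 < lam₀ ∧ lam₀ ≤ 1 / 8 ∧
      ∀ (N : ℕ), 1 ≤ N → ∀ d : Vec N → Vec N → ℝ, GoodMetric d → Doubling d cd →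
      ∀ T₁ T₂ : EReal, T₁ < T₂ →
      ∀ Γ : (Vec N × ℝ) → (Vec N × ℝ) → ℝ≥0∞,
        (∀ z ∈ strip N T₁ T₂, ∀ ζ ∈ strip N T₁ T₂,
          (ENNReal.ofReal Λ)⁻¹ * gaussK d b₀ z ζ ≤ Γ z ζ ∧
            Γ z ζ ≤ ENNReal.ofReal Λ * gaussK d a₀ z ζ) →
      ∀ M r : ℝ, Real.exp 1 ≤ M → 0 < r →
        {p : Vec N × ℝ | -r < p.2 ∧ p.2 < r} ⊆ strip N T₁ T₂ →
      ∀ (x : Vec N) (t : ℝ) (ξ : Vec N) (τ : ℝ) (y : Vec N) (s : ℝ),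
        (x, t) ∈ strip N T₁ T₂ → (ξ, τ) ∈ strip N T₁ T₂ →
        (y, s) ∈ strip N T₁ T₂ →
        τ < t →
        d x 0 ≤ Real.sqrt (lam₀ * r * Real.log M) →
        d ξ 0 ≤ Real.sqrt (lam₀ * r * Real.log M) →
        -(lam₀ * r) < t → t < lam₀ * r → -(lam₀ * r) < τ → τ < lam₀ * r →
        τ ≤ s → s ≤ t →
        (1 / 2) * Real.sqrt (r * Real.log M / 2) ≤ d y ξ →
        Γ (y, s) (ξ, τ) ≤ (1 / 2 : ℝ≥0∞) * Γ (x, t) (ξ, τ) := by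
  obtain ⟨lam₀, hlam₀, hlam8, hlam_a, hdecay⟩ :=
    exists_small_scale cd ha₀ hb₀ (by positivity : (0 : ℝ) < (2 * Λ ^ 2)⁻¹)
  refine ⟨lam₀, hlam₀, hlam8, ?_⟩
  intro N _ d hd hD T₁ T₂ _ Γ hΓ M r hM hr _ x t ξ τ y s hxt hξτ hys hτt hdx hdξ _ ht hτ _ hτs hst
    hfar
  refine le_half_mul_of_two_sided hΛ (hΓ _ hys _ hξτ).2 (hΓ _ hxt _ hξτ).1 ?_
  rcases hτs.eq_or_lt with rfl | hτs
  · simp [gaussK_of_le]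
  have hL : 1 ≤ log M := (le_log_iff_exp_le ((exp_pos 1).trans_le hM)).2 hM
  obtain ⟨hxξ, hT, hXT, hRδ⟩ := cylinder_bounds (T := t - τ) hlam₀ hlam8 hr hL (hd.nonneg x ξ)
    (by linarith [hd.triangle x 0 ξ, hd.symm 0 ξ]) hfar (sub_pos.2 hτs) (by linarith)
    (by linarith)
  have hu : (d y ξ / √(s - τ)) ^ 2 = d y ξ ^ 2 / (s - τ) := by
    rw [div_pow, sq_sqrt (sub_pos.2 hτs).le]
  refine gaussK_le_of_far hd hD hcd.le hτs hst hxξ hT ?_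
    (hdecay _ (div_nonneg (hd.nonneg y ξ) (sqrt_nonneg _)) (by rwa [hu]))
  rw [hu, mul_div_assoc]
  nlinarith [div_nonneg (sq_nonneg (d y ξ)) (sub_pos.2 hτs).le]
end
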